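/- arXiv:2109.13069 — 4 statements merged into one kernel-verified Lean document; each statement's English description precedes it below -/
import Mathlib

section
/- (Proposition 2, optimality gap of Cluster Attack.) Suppose a clustered assignment (c', μ') minimizes the cluster distance, i.e. Dist(c', μ') ≤ Dist(c, μ) for every clustered assignment (c, μ) with N clusters, and suppose a clustered assignment (cᵐ, μᵐ) minimizes the total adversarial loss, i.e. Σ_{i∈I} l i (μᵐ(cᵐ(i))) ≤ Σ_{i∈I} l i (μ(c(i))) for every clustered assignment (c, μ) with N clusters. Then Σ_{i∈I} l i (μ'(c'(i))) − Σ_{i∈I} l i (μᵐ(cᵐ(i))) ≤ |M − m| · Dist(c', μ'). -/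
/-! Summed over `I`, the W-condition bounds the excess loss `Σ l(μ(c(i))) − Σ l(x*(i))` of any
clustered assignment between `m` and `M` times its cluster distance. So the distance-optimal assignment loses at most
`Σ l(x*) + M · Dist(c', μ')`, while any assignment `(cᵐ, μᵐ)` loses at least
`Σ l(x*) + m · Dist(cᵐ, μᵐ) ≥ Σ l(x*) + m · Dist(c', μ')`, using `m ≥ 0` and the optimality of
`(c', μ')`. -/

/-- The cluster distance of a clustered assignment `(c, μ)`:
`Dist(c, μ) = Σ_{i ∈ I} ‖x*(i) − μ(c(i))‖²`. -/
noncomputable def clusterDist {I : Type*} [Fintype I] {D N : ℕ}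
    (xstar : I → EuclideanSpace ℝ (Fin D))
    (c : I → Fin N) (μ : Fin N → EuclideanSpace ℝ (Fin D)) : ℝ :=
  ∑ i : I, ‖xstar i - μ (c i)‖ ^ 2

section ClusterLoss

variable {I : Type*} [Fintype I] {D N : ℕ} (xstar : I → EuclideanSpace ℝ (Fin D))
  (l : I → EuclideanSpace ℝ (Fin D) → ℝ)

theorem clusterDist_nonneg (c : I → Fin N) (μ : Fin N → EuclideanSpace ℝ (Fin D)) :
    0 ≤ clusterDist xstar c μ :=
  Finset.sum_nonneg fun _ _ => sq_nonneg _

variable [Nonempty I]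

theorem sum_loss_le_add_sup'_mul_clusterDist (M : I → ℝ)
    (hM : ∀ i x, l i x - l i (xstar i) ≤ M i * ‖x - xstar i‖ ^ 2)
    (c : I → Fin N) (μ : Fin N → EuclideanSpace ℝ (Fin D)) :
    ∑ i, l i (μ (c i)) ≤
      ∑ i, l i (xstar i) + Finset.univ.sup' Finset.univ_nonempty M * clusterDist xstar c μ := by
  rw [clusterDist, Finset.mul_sum, ← Finset.sum_add_distrib]
  refine Finset.sum_le_sum fun i _ => ?_
  have hMi : M i * ‖μ (c i) - xstar i‖ ^ 2 ≤
      Finset.univ.sup' Finset.univ_nonempty M * ‖xstar i - μ (c i)‖ ^ 2 := by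
    rw [norm_sub_rev]
    exact mul_le_mul_of_nonneg_right (Finset.le_sup' M (Finset.mem_univ i)) (sq_nonneg _)
  linarith [hM i (μ (c i))]

theorem add_inf'_mul_clusterDist_le_sum_loss (m : I → ℝ)
    (hm : ∀ i x, m i * ‖x - xstar i‖ ^ 2 ≤ l i x - l i (xstar i))
    (c : I → Fin N) (μ : Fin N → EuclideanSpace ℝ (Fin D)) :
    ∑ i, l i (xstar i) + Finset.univ.inf' Finset.univ_nonempty m * clusterDist xstar c μ ≤
      ∑ i, l i (μ (c i)) := by
  rw [clusterDist, Finset.mul_sum, ← Finset.sum_add_distrib]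
  refine Finset.sum_le_sum fun i _ => ?_
  have hmi : Finset.univ.inf' Finset.univ_nonempty m * ‖xstar i - μ (c i)‖ ^ 2 ≤
      m i * ‖μ (c i) - xstar i‖ ^ 2 := by
    rw [norm_sub_rev]
    exact mul_le_mul_of_nonneg_right (Finset.inf'_le m (Finset.mem_univ i)) (sq_nonneg _)
  linarith [hm i (μ (c i))]

end ClusterLoss

theorem cluster_attack_optimality_gap_general
    {I : Type*} [Fintype I] [Nonempty I] (D N : ℕ)
    (xstar : I → EuclideanSpace ℝ (Fin D))
    (l : I → EuclideanSpace ℝ (Fin D) → ℝ) (m M : I → ℝ)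
    (hm0 : ∀ i, 0 ≤ m i)
    (hW : ∀ (i : I) (x : EuclideanSpace ℝ (Fin D)),
      m i * ‖x - xstar i‖ ^ 2 ≤ l i x - l i (xstar i) ∧
        l i x - l i (xstar i) ≤ M i * ‖x - xstar i‖ ^ 2)
    (c' : I → Fin N) (μ' : Fin N → EuclideanSpace ℝ (Fin D))
    (hdist : ∀ (c : I → Fin N) (μ : Fin N → EuclideanSpace ℝ (Fin D)),
      clusterDist xstar c' μ' ≤ clusterDist xstar c μ)
    (cm : I → Fin N) (μm : Fin N → EuclideanSpace ℝ (Fin D)) :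
    ∑ i : I, l i (μ' (c' i)) - ∑ i : I, l i (μm (cm i)) ≤
      |Finset.univ.sup' Finset.univ_nonempty M -
        Finset.univ.inf' Finset.univ_nonempty m| * clusterDist xstar c' μ' := by
  set Msup := Finset.univ.sup' Finset.univ_nonempty M
  set minf := Finset.univ.inf' Finset.univ_nonempty m
  have hupper := sum_loss_le_add_sup'_mul_clusterDist xstar l M (fun i x => (hW i x).2) c' μ'
  have hlower := add_inf'_mul_clusterDist_le_sum_loss xstar l m (fun i x => (hW i x).1) cm μm
  have hminf : 0 ≤ minf := Finset.le_inf' _ _ fun i _ => hm0 i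
  have hdist_m : minf * clusterDist xstar c' μ' ≤ minf * clusterDist xstar cm μm :=
    mul_le_mul_of_nonneg_left (hdist cm μm) hminf
  calc ∑ i, l i (μ' (c' i)) - ∑ i, l i (μm (cm i))
      ≤ (Msup - minf) * clusterDist xstar c' μ' := by linarith
    _ ≤ |Msup - minf| * clusterDist xstar c' μ' :=
      mul_le_mul_of_nonneg_right (le_abs_self _) (clusterDist_nonneg xstar c' μ')

/-- Proposition 2 (optimality gap of Cluster Attack): if `(c', μ')` minimizes the
cluster distance and `(cᵐ, μᵐ)` minimizes the total adversarial loss, then the gap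
between their adversarial losses is at most `|M − m| · Dist(c', μ')`. -/
theorem cluster_attack_optimality_gap
    {I : Type*} [Fintype I] [Nonempty I] (D N : ℕ) (hD : 0 < D) (hN : 0 < N)
    (xstar : I → EuclideanSpace ℝ (Fin D))
    (l : I → EuclideanSpace ℝ (Fin D) → ℝ) (m M : I → ℝ)
    (hm0 : ∀ i, 0 ≤ m i) (hmM : ∀ i, m i ≤ M i)
    (hW : ∀ (i : I) (x : EuclideanSpace ℝ (Fin D)),
      m i * ‖x - xstar i‖ ^ 2 ≤ l i x - l i (xstar i) ∧
        l i x - l i (xstar i) ≤ M i * ‖x - xstar i‖ ^ 2)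
    (c' : I → Fin N) (μ' : Fin N → EuclideanSpace ℝ (Fin D))
    (hdist : ∀ (c : I → Fin N) (μ : Fin N → EuclideanSpace ℝ (Fin D)),
      clusterDist xstar c' μ' ≤ clusterDist xstar c μ)
    (cm : I → Fin N) (μm : Fin N → EuclideanSpace ℝ (Fin D))
    (hloss : ∀ (c : I → Fin N) (μ : Fin N → EuclideanSpace ℝ (Fin D)),
      ∑ i : I, l i (μm (cm i)) ≤ ∑ i : I, l i (μ (c i))) :
    ∑ i : I, l i (μ' (c' i)) - ∑ i : I, l i (μm (cm i)) ≤
      |Finset.univ.sup' Finset.univ_nonempty M -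
        Finset.univ.inf' Finset.univ_nonempty m| * clusterDist xstar c' μ' :=
  cluster_attack_optimality_gap_general D N xstar l m M hm0 hW c' μ' hdist cm μm
end

section
/- (Strengthened form of Proposition 2 established by its proof.) Suppose a clustered assignment (c', μ') minimizes the cluster distance, i.e. Dist(c', μ') ≤ Dist(c, μ) for every clustered assignment (c, μ) with N clusters. Then for EVERY clustered assignment (c, μ) with N clusters, Σ_{i∈I} l i (μ'(c'(i))) − Σ_{i∈I} l i (μ(c(i))) ≤ (M − m) · Dist(c', μ'). -/
open Finset

section QuadraticGrowth

variable {I E : Type*} [Fintype I] [Nonempty I] [SeminormedAddCommGroup E]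
  (l : I → E → ℝ) (xstar y : I → E)

theorem sum_sub_sum_le_sup'_mul_sum_norm_sq (M : I → ℝ)
    (hM : ∀ i x, l i x - l i (xstar i) ≤ M i * ‖x - xstar i‖ ^ 2) :
    ∑ i, l i (y i) - ∑ i, l i (xstar i) ≤
      univ.sup' univ_nonempty M * ∑ i, ‖xstar i - y i‖ ^ 2 := by
  rw [← sum_sub_distrib, mul_sum]
  gcongr with i
  calc l i (y i) - l i (xstar i) ≤ M i * ‖y i - xstar i‖ ^ 2 := hM i (y i)
    _ ≤ univ.sup' univ_nonempty M * ‖xstar i - y i‖ ^ 2 := by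
      rw [norm_sub_rev]
      gcongr
      exact le_sup' M (mem_univ i)

theorem inf'_mul_sum_norm_sq_le_sum_sub_sum (m : I → ℝ)
    (hm : ∀ i x, m i * ‖x - xstar i‖ ^ 2 ≤ l i x - l i (xstar i)) :
    univ.inf' univ_nonempty m * ∑ i, ‖xstar i - y i‖ ^ 2 ≤
      ∑ i, l i (y i) - ∑ i, l i (xstar i) := by
  rw [← sum_sub_distrib, mul_sum]
  gcongr with i
  calc univ.inf' univ_nonempty m * ‖xstar i - y i‖ ^ 2 ≤ m i * ‖y i - xstar i‖ ^ 2 := by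
        rw [norm_sub_rev]
        gcongr
        exact inf'_le m (mem_univ i)
    _ ≤ l i (y i) - l i (xstar i) := hm i (y i)

end QuadraticGrowth

theorem cluster_attack_optimality_gap_strong_general
    {I : Type*} [Fintype I] [Nonempty I] (D N : ℕ)
    (xstar : I → EuclideanSpace ℝ (Fin D))
    (l : I → EuclideanSpace ℝ (Fin D) → ℝ) (m M : I → ℝ)
    (hm0 : ∀ i, 0 ≤ m i)
    (hW : ∀ (i : I) (x : EuclideanSpace ℝ (Fin D)),
      m i * ‖x - xstar i‖ ^ 2 ≤ l i x - l i (xstar i) ∧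
        l i x - l i (xstar i) ≤ M i * ‖x - xstar i‖ ^ 2)
    (c' : I → Fin N) (μ' : Fin N → EuclideanSpace ℝ (Fin D))
    (hdist : ∀ (c : I → Fin N) (μ : Fin N → EuclideanSpace ℝ (Fin D)),
      clusterDist xstar c' μ' ≤ clusterDist xstar c μ) :
    ∀ (c : I → Fin N) (μ : Fin N → EuclideanSpace ℝ (Fin D)),
      ∑ i : I, l i (μ' (c' i)) - ∑ i : I, l i (μ (c i)) ≤
        (Finset.univ.sup' Finset.univ_nonempty M -
          Finset.univ.inf' Finset.univ_nonempty m) * clusterDist xstar c' μ' := by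
  intro c μ
  have upper : ∑ i, l i (μ' (c' i)) - ∑ i, l i (xstar i) ≤
      univ.sup' univ_nonempty M * clusterDist xstar c' μ' :=
    sum_sub_sum_le_sup'_mul_sum_norm_sq l xstar _ M fun i x ↦ (hW i x).2
  have lower : univ.inf' univ_nonempty m * clusterDist xstar c μ ≤
      ∑ i, l i (μ (c i)) - ∑ i, l i (xstar i) :=
    inf'_mul_sum_norm_sq_le_sum_sub_sum l xstar _ m fun i x ↦ (hW i x).1
  have minimal : univ.inf' univ_nonempty m * clusterDist xstar c' μ' ≤
      univ.inf' univ_nonempty m * clusterDist xstar c μ :=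
    mul_le_mul_of_nonneg_left (hdist c μ) (le_inf' _ _ fun i _ ↦ hm0 i)
  linarith

/-- Strengthened form of Proposition 2: if `(c', μ')` minimizes the cluster
distance, then for EVERY clustered assignment `(c, μ)` with `N` clusters,
`Σᵢ lᵢ(μ'(c'(i))) − Σᵢ lᵢ(μ(c(i))) ≤ (M − m) · Dist(c', μ')`. -/
theorem cluster_attack_optimality_gap_strong
    {I : Type*} [Fintype I] [Nonempty I] (D N : ℕ) (hD : 0 < D) (hN : 0 < N)
    (xstar : I → EuclideanSpace ℝ (Fin D))
    (l : I → EuclideanSpace ℝ (Fin D) → ℝ) (m M : I → ℝ)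
    (hm0 : ∀ i, 0 ≤ m i) (hmM : ∀ i, m i ≤ M i)
    (hW : ∀ (i : I) (x : EuclideanSpace ℝ (Fin D)),
      m i * ‖x - xstar i‖ ^ 2 ≤ l i x - l i (xstar i) ∧
        l i x - l i (xstar i) ≤ M i * ‖x - xstar i‖ ^ 2)
    (c' : I → Fin N) (μ' : Fin N → EuclideanSpace ℝ (Fin D))
    (hdist : ∀ (c : I → Fin N) (μ : Fin N → EuclideanSpace ℝ (Fin D)),
      clusterDist xstar c' μ' ≤ clusterDist xstar c μ) :
    ∀ (c : I → Fin N) (μ : Fin N → EuclideanSpace ℝ (Fin D)),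
      ∑ i : I, l i (μ' (c' i)) - ∑ i : I, l i (μ (c i)) ≤
        (Finset.univ.sup' Finset.univ_nonempty M -
          Finset.univ.inf' Finset.univ_nonempty m) * clusterDist xstar c' μ' :=
  cluster_attack_optimality_gap_strong_general D N xstar l m M hm0 hW c' μ' hdist
end

section
/- (Exact-quadratic corollary of Proposition 2.) Suppose m = M. If a clustered assignment (c', μ') minimizes the cluster distance (Dist(c', μ') ≤ Dist(c, μ) for every clustered assignment (c, μ) with N clusters) and a clustered assignment (cᵐ, μᵐ) minimizes the total adversarial loss (Σ_{i∈I} l i (μᵐ(cᵐ(i))) ≤ Σ_{i∈I} l i (μ(c(i))) for every clustered assignment (c, μ) with N clusters), then Σ_{i∈I} l i (μ'(c'(i))) = Σ_{i∈I} l i (μᵐ(cᵐ(i))). -/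
/-!
When `m = M = k`, the W-condition pins every loss down to `l i x = l i (x* i) + k ‖x − x* i‖²`,
so the total loss of any clustered assignment is the constant `Σ l i (x* i)` plus `k` times its
cluster distance. As `k ≥ 0`, a minimizer of the cluster distance also minimizes the total loss.
-/

theorem Finset.eq_inf'_of_inf'_eq_sup' {α β : Type*} [Lattice β] {s : Finset α} (hs : s.Nonempty)
    {m M : α → β} (hmM : ∀ i ∈ s, m i ≤ M i) (h : s.inf' hs m = s.sup' hs M)
    {i : α} (hi : i ∈ s) : m i = s.inf' hs m ∧ M i = s.inf' hs m := by
  have hm : s.inf' hs m ≤ m i := s.inf'_le m hi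
  have hM : M i ≤ s.inf' hs m := h ▸ s.le_sup' M hi
  exact ⟨le_antisymm (hmM i hi |>.trans hM) hm, le_antisymm hM (hm.trans (hmM i hi))⟩

theorem sum_loss_eq_add_mul_clusterDist {I : Type*} [Fintype I] {D N : ℕ}
    (xstar : I → EuclideanSpace ℝ (Fin D)) (l : I → EuclideanSpace ℝ (Fin D) → ℝ) (k : ℝ)
    (hl : ∀ i x, l i x = l i (xstar i) + k * ‖x - xstar i‖ ^ 2)
    (c : I → Fin N) (μ : Fin N → EuclideanSpace ℝ (Fin D)) :
    ∑ i : I, l i (μ (c i)) = ∑ i : I, l i (xstar i) + k * clusterDist xstar c μ := by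
  rw [clusterDist, Finset.mul_sum, ← Finset.sum_add_distrib]
  exact Finset.sum_congr rfl fun i _ => by rw [hl i, norm_sub_rev]

theorem cluster_attack_exact_quadratic_general
    {I : Type*} [Fintype I] [Nonempty I] (D N : ℕ)
    (xstar : I → EuclideanSpace ℝ (Fin D))
    (l : I → EuclideanSpace ℝ (Fin D) → ℝ) (m M : I → ℝ)
    (hm0 : ∀ i, 0 ≤ m i) (hmM : ∀ i, m i ≤ M i)
    (hW : ∀ (i : I) (x : EuclideanSpace ℝ (Fin D)),
      m i * ‖x - xstar i‖ ^ 2 ≤ l i x - l i (xstar i) ∧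
        l i x - l i (xstar i) ≤ M i * ‖x - xstar i‖ ^ 2)
    (hmm : Finset.univ.inf' Finset.univ_nonempty m =
      Finset.univ.sup' Finset.univ_nonempty M)
    (c' : I → Fin N) (μ' : Fin N → EuclideanSpace ℝ (Fin D))
    (hdist : ∀ (c : I → Fin N) (μ : Fin N → EuclideanSpace ℝ (Fin D)),
      clusterDist xstar c' μ' ≤ clusterDist xstar c μ)
    (cm : I → Fin N) (μm : Fin N → EuclideanSpace ℝ (Fin D))
    (hloss : ∀ (c : I → Fin N) (μ : Fin N → EuclideanSpace ℝ (Fin D)),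
      ∑ i : I, l i (μm (cm i)) ≤ ∑ i : I, l i (μ (c i))) :
    ∑ i : I, l i (μ' (c' i)) = ∑ i : I, l i (μm (cm i)) := by
  set k := Finset.univ.inf' Finset.univ_nonempty m
  have hk : 0 ≤ k := Finset.le_inf' _ _ fun i _ => hm0 i
  have hquad : ∀ i x, l i x = l i (xstar i) + k * ‖x - xstar i‖ ^ 2 := fun i x => by
    obtain ⟨hmi, hMi⟩ :=
      Finset.eq_inf'_of_inf'_eq_sup' _ (fun i _ => hmM i) hmm (Finset.mem_univ i)
    obtain ⟨hlow, hupp⟩ := hW i x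
    rw [hmi] at hlow
    rw [hMi] at hupp
    linarith
  refine le_antisymm ?_ (hloss c' μ')
  rw [sum_loss_eq_add_mul_clusterDist xstar l k hquad,
    sum_loss_eq_add_mul_clusterDist xstar l k hquad]
  gcongr
  exact hdist cm μm

/-- Exact-quadratic corollary of Proposition 2: when `m = M`, a minimizer of the
cluster distance achieves exactly the optimal total adversarial loss. -/
theorem cluster_attack_exact_quadratic
    {I : Type*} [Fintype I] [Nonempty I] (D N : ℕ) (hD : 0 < D) (hN : 0 < N)
    (xstar : I → EuclideanSpace ℝ (Fin D))
    (l : I → EuclideanSpace ℝ (Fin D) → ℝ) (m M : I → ℝ)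
    (hm0 : ∀ i, 0 ≤ m i) (hmM : ∀ i, m i ≤ M i)
    (hW : ∀ (i : I) (x : EuclideanSpace ℝ (Fin D)),
      m i * ‖x - xstar i‖ ^ 2 ≤ l i x - l i (xstar i) ∧
        l i x - l i (xstar i) ≤ M i * ‖x - xstar i‖ ^ 2)
    (hmm : Finset.univ.inf' Finset.univ_nonempty m =
      Finset.univ.sup' Finset.univ_nonempty M)
    (c' : I → Fin N) (μ' : Fin N → EuclideanSpace ℝ (Fin D))
    (hdist : ∀ (c : I → Fin N) (μ : Fin N → EuclideanSpace ℝ (Fin D)),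
      clusterDist xstar c' μ' ≤ clusterDist xstar c μ)
    (cm : I → Fin N) (μm : Fin N → EuclideanSpace ℝ (Fin D))
    (hloss : ∀ (c : I → Fin N) (μ : Fin N → EuclideanSpace ℝ (Fin D)),
      ∑ i : I, l i (μm (cm i)) ≤ ∑ i : I, l i (μ (c i))) :
    ∑ i : I, l i (μ' (c' i)) = ∑ i : I, l i (μm (cm i)) :=
  cluster_attack_exact_quadratic_general D N xstar l m M hm0 hmM hW hmm c' μ' hdist cm μm hloss
end

section
/- (Zero-cluster-distance optimality, a consequence of Proposition 2.) Suppose a clustered assignment (c', μ') minimizes the cluster distance (Dist(c', μ') ≤ Dist(c, μ) for every clustered assignment (c, μ) with N clusters) and Dist(c', μ') = 0. Then for every clustered assignment (c, μ) with N clusters, Σ_{i∈I} l i (μ'(c'(i))) ≤ Σ_{i∈I} l i (μ(c(i))); that is, (c', μ') also minimizes the total adversarial loss. -/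
theorem clusterDist_eq_zero_iff {I : Type*} [Fintype I] {D N : ℕ}
    (xstar : I → EuclideanSpace ℝ (Fin D))
    (c : I → Fin N) (μ : Fin N → EuclideanSpace ℝ (Fin D)) :
    clusterDist xstar c μ = 0 ↔ ∀ i, μ (c i) = xstar i := by
  rw [clusterDist, Finset.sum_eq_zero_iff_of_nonneg fun _ _ => by positivity]
  simp only [Finset.mem_univ, forall_const, sq_eq_zero_iff, norm_eq_zero, sub_eq_zero]
  exact forall_congr' fun _ => eq_comm

theorem isMinOn_of_quadratic_growth {E : Type*} [SeminormedAddCommGroup E]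
    {f : E → ℝ} {x₀ : E} {m : ℝ} (hm : 0 ≤ m)
    (hgrowth : ∀ x, m * ‖x - x₀‖ ^ 2 ≤ f x - f x₀) :
    IsMinOn f Set.univ x₀ :=
  isMinOn_univ_iff.mpr fun x => by linarith [hgrowth x, mul_nonneg hm (sq_nonneg ‖x - x₀‖)]

theorem zero_cluster_distance_optimality_general
    {I : Type*} [Fintype I] (D N : ℕ)
    (xstar : I → EuclideanSpace ℝ (Fin D))
    (l : I → EuclideanSpace ℝ (Fin D) → ℝ) (m M : I → ℝ)
    (hm0 : ∀ i, 0 ≤ m i)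
    (hW : ∀ (i : I) (x : EuclideanSpace ℝ (Fin D)),
      m i * ‖x - xstar i‖ ^ 2 ≤ l i x - l i (xstar i) ∧
        l i x - l i (xstar i) ≤ M i * ‖x - xstar i‖ ^ 2)
    (c' : I → Fin N) (μ' : Fin N → EuclideanSpace ℝ (Fin D))
    (hzero : clusterDist xstar c' μ' = 0) :
    ∀ (c : I → Fin N) (μ : Fin N → EuclideanSpace ℝ (Fin D)),
      ∑ i : I, l i (μ' (c' i)) ≤ ∑ i : I, l i (μ (c i)) := by
  intro c μ
  have hcenter := (clusterDist_eq_zero_iff xstar c' μ').mp hzero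
  refine Finset.sum_le_sum fun i _ => ?_
  rw [hcenter i]
  exact isMinOn_univ_iff.mp (isMinOn_of_quadratic_growth (hm0 i) fun x => (hW i x).1) _

/-- Zero-cluster-distance optimality: a minimizer of the cluster distance with zero
cluster distance also minimizes the total adversarial loss. -/
theorem zero_cluster_distance_optimality
    {I : Type*} [Fintype I] [Nonempty I] (D N : ℕ) (hD : 0 < D) (hN : 0 < N)
    (xstar : I → EuclideanSpace ℝ (Fin D))
    (l : I → EuclideanSpace ℝ (Fin D) → ℝ) (m M : I → ℝ)
    (hm0 : ∀ i, 0 ≤ m i) (hmM : ∀ i, m i ≤ M i)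
    (hW : ∀ (i : I) (x : EuclideanSpace ℝ (Fin D)),
      m i * ‖x - xstar i‖ ^ 2 ≤ l i x - l i (xstar i) ∧
        l i x - l i (xstar i) ≤ M i * ‖x - xstar i‖ ^ 2)
    (c' : I → Fin N) (μ' : Fin N → EuclideanSpace ℝ (Fin D))
    (hdist : ∀ (c : I → Fin N) (μ : Fin N → EuclideanSpace ℝ (Fin D)),
      clusterDist xstar c' μ' ≤ clusterDist xstar c μ)
    (hzero : clusterDist xstar c' μ' = 0) :
    ∀ (c : I → Fin N) (μ : Fin N → EuclideanSpace ℝ (Fin D)),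
      ∑ i : I, l i (μ' (c' i)) ≤ ∑ i : I, l i (μ (c i)) :=
  zero_cluster_distance_optimality_general D N xstar l m M hm0 hW c' μ' hzero
end
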